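/- arXiv:2603.09924 — 3 statements merged into one kernel-verified Lean document; each statement's English description precedes it below -/
import Mathlib

section
/- Let V be a finite-dimensional real vector space with symmetric positive definite bilinear forms a. Suppose V = V₁ + ... + V_N is a decomposition into subspaces such that every v ∈ V admits a decomposition v = Σᵢ vᵢ with vᵢ ∈ Vᵢ and Σᵢ a(vᵢ, vᵢ) ≤ C₀·a(v, v) for some constant C₀ > 0. Let Pᵢ be the a-orthogonal projection onto Vᵢ and P = Σᵢ Pᵢ. Then a(P v, v) ≥ C₀⁻¹·a(v, v) for all v ∈ V. -/
/-!
Write `S = a (P v) v`. Since each `Pᵢ` is the `a`-orthogonal projection onto `Vᵢ`,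
`S = ∑ᵢ a (Pᵢ v, Pᵢ v)` and, for a stable decomposition `v = ∑ᵢ vᵢ`,
`a (v, v) = ∑ᵢ a (v, vᵢ) = ∑ᵢ a (Pᵢ v, vᵢ)`. Cauchy–Schwarz for the form
`(x, y) ↦ ∑ᵢ a (xᵢ, yᵢ)` on tuples gives `a (v, v)² ≤ S · ∑ᵢ a (vᵢ, vᵢ) ≤ S · C₀ · a (v, v)`.
-/

open Finset

section SchwarzProjections

variable {R M ι : Type*} [CommSemiring R] [AddCommMonoid M] [Module R M] [Fintype ι]

def LinearMap.BilinForm.pi (B : LinearMap.BilinForm R M) : LinearMap.BilinForm R (ι → M) :=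
  ∑ i, B.compl₁₂ (LinearMap.proj i) (LinearMap.proj i)

@[simp]
theorem LinearMap.BilinForm.pi_apply (B : LinearMap.BilinForm R M) (x y : ι → M) :
    B.pi x y = ∑ i, B (x i) (y i) := by
  simp [LinearMap.BilinForm.pi]

variable (a : LinearMap.BilinForm R M) (W : ι → Submodule R M) (P : ι → M →ₗ[R] M)

theorem apply_sum_apply_self_eq_sum (ha_symm : ∀ v w, a v w = a w v)
    (hPmem : ∀ i v, P i v ∈ W i) (hPdef : ∀ i v, ∀ w ∈ W i, a (P i v) w = a v w) (v : M) :
    a ((∑ i, P i) v) v = ∑ i, a (P i v) (P i v) := by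
  simp only [LinearMap.sum_apply, map_sum]
  exact sum_congr rfl fun i _ => by rw [hPdef i v _ (hPmem i v), ha_symm]

theorem apply_self_eq_sum_apply_of_eq_sum (hPdef : ∀ i v, ∀ w ∈ W i, a (P i v) w = a v w)
    {v : M} {vs : ι → M} (hvs_mem : ∀ i, vs i ∈ W i) (hv : v = ∑ i, vs i) :
    a v v = ∑ i, a (P i v) (vs i) := by
  nth_rewrite 2 [hv]
  rw [map_sum]
  exact sum_congr rfl fun i _ => (hPdef i v (vs i) (hvs_mem i)).symm

end SchwarzProjections

theorem LinearMap.BilinForm.sum_apply_mul_sum_apply_le {R M ι : Type*} [CommRing R]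
    [LinearOrder R] [IsStrictOrderedRing R] [AddCommGroup M] [Module R M] [Fintype ι]
    (B : LinearMap.BilinForm R M) (hB : ∀ x, 0 ≤ B x x) (x y : ι → M) :
    (∑ i, B (x i) (y i)) * ∑ i, B (y i) (x i) ≤ (∑ i, B (x i) (x i)) * ∑ i, B (y i) (y i) := by
  simpa using (B.pi (ι := ι)).apply_mul_apply_le_of_forall_zero_le
    (fun z => by simpa using sum_nonneg fun i _ => hB (z i)) x y

theorem inv_mul_le_of_sq_le_mul_mul {𝕜 : Type*} [Field 𝕜] [LinearOrder 𝕜] [IsStrictOrderedRing 𝕜]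
    {x S C : 𝕜} (hx : 0 ≤ x) (hS : 0 ≤ S) (h : x ^ 2 ≤ S * (C * x)) : C⁻¹ * x ≤ S := by
  rcases hx.eq_or_lt with rfl | hx
  · simpa using hS
  have hxSC : x ≤ S * C := le_of_mul_le_mul_right (by linarith) hx
  have hC : 0 < C := pos_of_mul_pos_right (hx.trans_le hxSC) hS
  rwa [inv_mul_le_iff₀ hC, mul_comm]

theorem inv_mul_le_apply_sum_apply_self {𝕜 M ι : Type*} [Field 𝕜] [LinearOrder 𝕜]
    [IsStrictOrderedRing 𝕜] [AddCommGroup M] [Module 𝕜 M] [Fintype ι]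
    (a : LinearMap.BilinForm 𝕜 M) (W : ι → Submodule 𝕜 M) (P : ι → M →ₗ[𝕜] M)
    (ha_symm : ∀ v w, a v w = a w v) (ha_nonneg : ∀ v, 0 ≤ a v v) (hPmem : ∀ i v, P i v ∈ W i)
    (hPdef : ∀ i v, ∀ w ∈ W i, a (P i v) w = a v w) {C : 𝕜} {v : M} {vs : ι → M}
    (hvs_mem : ∀ i, vs i ∈ W i) (hv : v = ∑ i, vs i)
    (hC : ∑ i, a (vs i) (vs i) ≤ C * a v v) :
    C⁻¹ * a v v ≤ a ((∑ i, P i) v) v := by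
  have hPv := apply_self_eq_sum_apply_of_eq_sum a W P hPdef hvs_mem hv
  have hvP : a v v = ∑ i, a (vs i) (P i v) := by simpa only [ha_symm (P _ v)] using hPv
  have hcs := a.sum_apply_mul_sum_apply_le ha_nonneg (fun i => P i v) vs
  rw [← hPv, ← hvP] at hcs
  rw [apply_sum_apply_self_eq_sum a W P ha_symm hPmem hPdef]
  refine inv_mul_le_of_sq_le_mul_mul (ha_nonneg v) (sum_nonneg fun i _ => ha_nonneg _) ?_
  calc a v v ^ 2 ≤ (∑ i, a (P i v) (P i v)) * ∑ i, a (vs i) (vs i) := by rwa [sq]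
    _ ≤ (∑ i, a (P i v) (P i v)) * (C * a v v) :=
      mul_le_mul_of_nonneg_left hC (sum_nonneg fun i _ => ha_nonneg _)

theorem stmt6_general {V : Type*} [AddCommGroup V] [Module ℝ V]
    (a : V →ₗ[ℝ] V →ₗ[ℝ] ℝ)
    (ha_symm : ∀ v w : V, a v w = a w v)
    (ha_pos : ∀ v : V, v ≠ 0 → 0 < a v v)
    (N : ℕ)
    (Vi : Fin N → Submodule ℝ V)
    (C₀ : ℝ)
    (hstable : ∀ v : V, ∃ vs : Fin N → V,
      (∀ i, vs i ∈ Vi i) ∧ v = ∑ i, vs i ∧ ∑ i, a (vs i) (vs i) ≤ C₀ * a v v)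
    (P : Fin N → V →ₗ[ℝ] V)
    (hPmem : ∀ i, ∀ v : V, P i v ∈ Vi i)
    (hPdef : ∀ i, ∀ v : V, ∀ w ∈ Vi i, a (P i v) w = a v w) :
    ∀ v : V, C₀⁻¹ * a v v ≤ a ((∑ i, P i) v) v := by
  have ha_nonneg : ∀ v, 0 ≤ a v v := fun v => by
    rcases eq_or_ne v 0 with rfl | hv
    · simp
    · exact (ha_pos v hv).le
  intro v
  obtain ⟨vs, hvs_mem, hv, hC⟩ := hstable v
  exact inv_mul_le_apply_sum_apply_self a Vi P ha_symm ha_nonneg hPmem hPdef hvs_mem hv hC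

/-- Lions' lemma: the stable decomposition yields the lower spectral bound for the
additive Schwarz operator. -/
theorem stmt6 {V : Type*} [AddCommGroup V] [Module ℝ V] [FiniteDimensional ℝ V]
    (a : V →ₗ[ℝ] V →ₗ[ℝ] ℝ)
    (ha_symm : ∀ v w : V, a v w = a w v)
    (ha_pos : ∀ v : V, v ≠ 0 → 0 < a v v)
    (N : ℕ)
    (Vi : Fin N → Submodule ℝ V)
    (hspan : (⨆ i, Vi i) = ⊤)
    (C₀ : ℝ) (hC₀ : 0 < C₀)
    (hstable : ∀ v : V, ∃ vs : Fin N → V,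
      (∀ i, vs i ∈ Vi i) ∧ v = ∑ i, vs i ∧ ∑ i, a (vs i) (vs i) ≤ C₀ * a v v)
    (P : Fin N → V →ₗ[ℝ] V)
    (hPmem : ∀ i, ∀ v : V, P i v ∈ Vi i)
    (hPdef : ∀ i, ∀ v : V, ∀ w ∈ Vi i, a (P i v) w = a v w) :
    ∀ v : V, C₀⁻¹ * a v v ≤ a ((∑ i, P i) v) v :=
  stmt6_general a ha_symm ha_pos N Vi C₀ hstable P hPmem hPdef
end

section
/- Let V be a finite-dimensional real vector space with symmetric positive definite bilinear form a, and let V₁,...,V_N be subspaces with a-orthogonal projections Pᵢ. Suppose the index set {1,...,N} admits a coloring into at most C colors such that subspaces of the same color are mutually a-orthogonal. Then for all v ∈ V, a((Σᵢ Pᵢ) v, v) ≤ C·a(v,v). -/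
/-!
Split the indices into the `C` colour classes. Within one class the ranges of the projections are
mutually `a`-orthogonal, so `Q = ∑ Pᵢ v` over the class satisfies `a(Q, Q) = a(Q, v)`; then
`0 ≤ a(v - Q, v - Q) = a(v, v) - a(Q, v)` bounds the contribution of each class by `a(v, v)`.
-/

open Finset

section

variable {V ι : Type*} [AddCommGroup V] [Module ℝ V] (a : V →ₗ[ℝ] V →ₗ[ℝ] ℝ)

theorem apply_le_apply_self_of_apply_self_eq (ha_symm : ∀ v w : V, a v w = a w v)
    (ha_nonneg : ∀ w : V, 0 ≤ a w w) {u v : V} (h : a u u = a u v) : a u v ≤ a v v := by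
  have hexp : a (v - u) (v - u) = a v v - a u v := by
    simp only [map_sub, LinearMap.sub_apply]
    rw [ha_symm v u, h]
    ring
  linarith [ha_nonneg (v - u)]

theorem sum_apply_le_apply_self_of_pairwise_orthogonal (ha_symm : ∀ v w : V, a v w = a w v)
    (ha_nonneg : ∀ w : V, 0 ≤ a w w) {Vi : ι → Submodule ℝ V} {P : ι → V →ₗ[ℝ] V}
    (hPmem : ∀ i, ∀ v : V, P i v ∈ Vi i) (hPdef : ∀ i, ∀ v : V, ∀ w ∈ Vi i, a (P i v) w = a v w)
    {s : Finset ι}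
    (hs : (s : Set ι).Pairwise fun i j => ∀ vi ∈ Vi i, ∀ vj ∈ Vi j, a vi vj = 0) (v : V) :
    ∑ i ∈ s, a (P i v) v ≤ a v v := by
  set Q := ∑ i ∈ s, P i v
  have hQv : a Q v = ∑ i ∈ s, a (P i v) v := by
    simp only [Q, map_sum, LinearMap.sum_apply]
  have hQP : ∀ j ∈ s, a Q (P j v) = a (P j v) v := by
    intro j hj
    simp only [Q, map_sum, LinearMap.sum_apply]
    rw [sum_eq_single_of_mem j hj fun i hi hij => hs hi hj hij _ (hPmem i v) _ (hPmem j v),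
      hPdef j v _ (hPmem j v), ha_symm]
  have hQQ : a Q Q = a Q v := by
    rw [hQv, ← sum_congr rfl hQP]
    exact map_sum (a Q) _ s
  rw [← hQv]
  exact apply_le_apply_self_of_apply_self_eq a ha_symm ha_nonneg hQQ

end

theorem stmt8_general {V : Type*} [AddCommGroup V] [Module ℝ V]
    (a : V →ₗ[ℝ] V →ₗ[ℝ] ℝ)
    (ha_symm : ∀ v w : V, a v w = a w v)
    (ha_pos : ∀ v : V, v ≠ 0 → 0 < a v v)
    (N C : ℕ)
    (Vi : Fin N → Submodule ℝ V)
    (P : Fin N → V →ₗ[ℝ] V)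
    (hPmem : ∀ i, ∀ v : V, P i v ∈ Vi i)
    (hPdef : ∀ i, ∀ v : V, ∀ w ∈ Vi i, a (P i v) w = a v w)
    (c : Fin N → Fin C)
    (hcolor : ∀ i j, i ≠ j → c i = c j →
      ∀ vi ∈ Vi i, ∀ vj ∈ Vi j, a vi vj = 0) :
    ∀ v : V, a ((∑ i, P i) v) v ≤ (C : ℝ) * a v v := by
  intro v
  have ha_nonneg : ∀ w : V, 0 ≤ a w w := fun w =>
    (eq_or_ne w 0).elim (fun hw => by simp [hw]) fun hw => (ha_pos w hw).le
  have hclass : ∀ k : Fin C, ∑ i with c i = k, a (P i v) v ≤ a v v := fun k =>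
    sum_apply_le_apply_self_of_pairwise_orthogonal a ha_symm ha_nonneg hPmem hPdef
      (fun i hi j hj hij => hcolor i j hij ((mem_filter.1 hi).2.trans (mem_filter.1 hj).2.symm)) v
  calc a ((∑ i, P i) v) v = ∑ k : Fin C, ∑ i with c i = k, a (P i v) v := by
        rw [sum_fiberwise, LinearMap.sum_apply, map_sum, LinearMap.sum_apply]
    _ ≤ ∑ _k : Fin C, a v v := sum_le_sum fun k _ => hclass k
    _ = C * a v v := by simp

/-- Coloring upper bound in additive Schwarz theory. -/
theorem stmt8 {V : Type*} [AddCommGroup V] [Module ℝ V] [FiniteDimensional ℝ V]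
    (a : V →ₗ[ℝ] V →ₗ[ℝ] ℝ)
    (ha_symm : ∀ v w : V, a v w = a w v)
    (ha_pos : ∀ v : V, v ≠ 0 → 0 < a v v)
    (N C : ℕ)
    (Vi : Fin N → Submodule ℝ V)
    (P : Fin N → V →ₗ[ℝ] V)
    (hPmem : ∀ i, ∀ v : V, P i v ∈ Vi i)
    (hPdef : ∀ i, ∀ v : V, ∀ w ∈ Vi i, a (P i v) w = a v w)
    (c : Fin N → Fin C)
    (hcolor : ∀ i j, i ≠ j → c i = c j →
      ∀ vi ∈ Vi i, ∀ vj ∈ Vi j, a vi vj = 0) :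
    ∀ v : V, a ((∑ i, P i) v) v ≤ (C : ℝ) * a v v :=
  stmt8_general a ha_symm ha_pos N C Vi P hPmem hPdef c hcolor
end

section
/- Let V be a finite-dimensional real inner product space with inner product a and let T : V → V be a-symmetric positive definite with eigenvalues in [m, M] ⊂ (0, ∞). Then for all v ∈ V, a(T v, v)·a(T⁻¹ v, v) ≤ ((m+M)²/(4 m M))·a(v,v)², i.e., the Kantorovich inequality holds for T in the inner product a. -/
/-- The Kantorovich inequality for an a-self-adjoint positive definite operator with
spectrum in `[m, M]`. -/
theorem stmt19 {V : Type*} [AddCommGroup V] [Module ℝ V] [FiniteDimensional ℝ V]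
    (a : V →ₗ[ℝ] V →ₗ[ℝ] ℝ)
    (ha_symm : ∀ v w : V, a v w = a w v)
    (ha_pos : ∀ v : V, v ≠ 0 → 0 < a v v)
    (T : V →ₗ[ℝ] V)
    (hT_symm : ∀ v w : V, a (T v) w = a v (T w))
    (hT_pos : ∀ v : V, v ≠ 0 → 0 < a (T v) v)
    (m M : ℝ) (hm : 0 < m) (hmM : m ≤ M)
    (hspec : ∀ lam : ℝ, Module.End.HasEigenvalue (T : Module.End ℝ V) lam →
      lam ∈ Set.Icc m M) :
    ∃ S : V →ₗ[ℝ] V, S.comp T = LinearMap.id ∧ T.comp S = LinearMap.id ∧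
      ∀ v : V, a (T v) v * a (S v) v ≤ ((m + M) ^ 2 / (4 * m * M)) * (a v v) ^ 2 := by
  classical
  -- T injective
  have hinj : Function.Injective T := by
    intro x y hxy
    by_contra h
    have hx : x - y ≠ 0 := sub_ne_zero.mpr h
    have h2 := hT_pos (x - y) hx
    rw [show T (x - y) = T x - T y from map_sub T x y, hxy, sub_self] at h2
    simp at h2
  have hsurj : Function.Surjective T := (LinearMap.injective_iff_surjective).mp hinj
  let e : V ≃ₗ[ℝ] V := LinearEquiv.ofBijective T ⟨hinj, hsurj⟩
  refine ⟨e.symm.toLinearMap, ?_, ?_, ?_⟩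
  · ext v; exact e.symm_apply_apply v
  · ext v; exact e.apply_symm_apply v
  intro v
  -- inner product structure from a
  letI core : InnerProductSpace.Core ℝ V :=
    { inner := fun x y => a x y
      conj_inner_symm := fun x y => by simpa using ha_symm y x
      re_inner_nonneg := fun x => by
        rcases eq_or_ne x 0 with rfl | hx
        · simp
        · exact le_of_lt (by simpa using ha_pos x hx)
      definite := fun x hx => by
        by_contra h
        exact (ha_pos x h).ne' (by simpa using hx)
      add_left := fun x y z => by simp
      smul_left := fun x y r => by simp }
  letI : NormedAddCommGroup V := @InnerProductSpace.Core.toNormedAddCommGroup ℝ V _ _ _ core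
  letI : InnerProductSpace ℝ V := InnerProductSpace.ofCore core.toCore
  have hip : ∀ x y : V, (inner ℝ x y : ℝ) = a x y := fun x y => rfl
  have hT : (T : V →ₗ[ℝ] V).IsSymmetric := by
    intro x y
    rw [hip, hip, hT_symm]
  set n := Module.finrank ℝ V with hn'
  have hn : Module.finrank ℝ V = n := rfl
  set b := hT.eigenvectorBasis hn with hb
  set μ := hT.eigenvalues hn with hμ
  have hμmem : ∀ i, μ i ∈ Set.Icc m M := fun i =>
    hspec (μ i) (hT.hasEigenvalue_eigenvalues hn i)
  have hμpos : ∀ i, 0 < μ i := fun i => lt_of_lt_of_le hm (hμmem i).1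
  have hTb : ∀ i, T (b i) = μ i • b i := fun i => hT.apply_eigenvectorBasis hn i
  have hab : ∀ i j, a (b i) (b j) = if i = j then 1 else 0 := by
    intro i j
    rw [← hip]
    rcases eq_or_ne i j with rfl | h
    · simp [b.orthonormal.1 i, real_inner_self_eq_norm_sq]
    · simp [b.orthonormal.2 h, h]
  have key : ∀ f g : Fin n → ℝ, a (∑ i, f i • b i) (∑ j, g j • b j) = ∑ i, f i * g i := by
    intro f g
    simp only [map_sum, LinearMap.sum_apply, map_smul, LinearMap.smul_apply, smul_eq_mul]
    simp only [hab, mul_ite, mul_one, mul_zero, Finset.sum_ite_eq', Finset.mem_univ, if_true]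
    exact Finset.sum_congr rfl fun i _ => mul_comm _ _
  set c : Fin n → ℝ := fun i => b.repr v i with hc
  have hv : v = ∑ i, c i • b i := (b.sum_repr v).symm
  have hTv : T v = ∑ i, (μ i * c i) • b i := by
    rw [hv, map_sum]
    congr 1; ext i
    rw [map_smul, hTb, smul_smul, mul_comm]
  have hSv : e.symm v = ∑ i, ((μ i)⁻¹ * c i) • b i := by
    apply hinj
    have : T (∑ i, ((μ i)⁻¹ * c i) • b i) = v := by
      rw [map_sum, hv]
      congr 1; ext i
      rw [map_smul, hTb, smul_smul]
      congr 1
      field_simp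
      exact mul_div_cancel_left₀ _ (hμpos i).ne'
    rw [this]
    exact e.apply_symm_apply v
  have havv : a v v = ∑ i, c i * c i := by rw [hv] at *; exact key c c
  have haTv : a (T v) v = ∑ i, (μ i * c i) * c i := by
    conv_lhs => rw [hTv, hv]
    exact key _ _
  have haSv : a (e.symm v) v = ∑ i, ((μ i)⁻¹ * c i) * c i := by
    conv_lhs => rw [hSv, hv]
    exact key _ _
  simp only [LinearEquiv.coe_coe] at *
  rw [haTv, haSv, havv]
  set x := ∑ i, (μ i * c i) * c i
  set y := ∑ i, ((μ i)⁻¹ * c i) * c i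
  set s := ∑ i, c i * c i
  have hx0 : 0 ≤ x := Finset.sum_nonneg fun i _ => by nlinarith [hμpos i, sq_nonneg (c i)]
  have hy0 : 0 ≤ y := Finset.sum_nonneg fun i _ => by
    have := inv_pos.mpr (hμpos i); nlinarith [sq_nonneg (c i)]
  have hkey : x + m * M * y ≤ (m + M) * s := by
    have : x + m * M * y = ∑ i, (μ i + m * M * (μ i)⁻¹) * (c i * c i) := by
      rw [Finset.mul_sum, ← Finset.sum_add_distrib]
      congr 1; ext i; ring
    rw [this, Finset.mul_sum]
    apply Finset.sum_le_sum
    intro i _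
    have h1 : μ i + m * M * (μ i)⁻¹ ≤ m + M := by
      have hp := hμpos i
      rw [← sub_nonneg]
      have : m + M - (μ i + m * M * (μ i)⁻¹) = (μ i - m) * (M - μ i) * (μ i)⁻¹ := by
        field_simp; ring
      rw [this]
      exact mul_nonneg (mul_nonneg (sub_nonneg.mpr (hμmem i).1)
        (sub_nonneg.mpr (hμmem i).2)) (inv_pos.mpr hp).le
    nlinarith [sq_nonneg (c i)]
  have hM : 0 < M := lt_of_lt_of_le hm hmM
  have hm4 : 0 < 4 * m * M := by positivity
  rw [div_mul_eq_mul_div, le_div_iff₀ hm4]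
  have h5 : 0 ≤ x + m * M * y :=
    add_nonneg hx0 (mul_nonneg (mul_nonneg hm.le hM.le) hy0)
  have h6 : (x + m * M * y) ^ 2 ≤ ((m + M) * s) ^ 2 := pow_le_pow_left₀ h5 hkey 2
  nlinarith [h6, sq_nonneg (x - m * M * y)]
end
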